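/- arXiv:1409.6946 — 4 statements merged into one kernel-verified Lean document; each statement's English description precedes it below -/
import Mathlib

section
/- Let ψ : ℝ → ℝ be continuous with ψ(0) = 1, |ψ(x)| < 1 for x ≠ 0, ψ(x) → 0 as |x| → ∞, and (1 - ψ(x))/x^2 → a^2 as x → 0 with a > 0. Fix b > 0. Then for each n, the measure m_n(dz) = dz/(1 + b^2 n^{-2} - ψ(n z)) is well defined (the denominator is strictly positive), and as n → ∞ the measures m_n converge weakly to m(dz) = dz + (π/(a b)) δ_0(dz), in the sense that ∫ f dm_n → ∫ f dm for every continuous compactly supported f : ℝ → ℝ. -/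
open MeasureTheory Real Filter Topology

/-!
Split `∫ f z / (1 + b²/n² - ψ (n z)) dz` according to whether `|n z| ≥ η` or `|n z| < η`.
Away from the origin the denominator stays above some `ρ > 0` and tends to `1` for `z ≠ 0`
(as `ψ (n z) → 0`), so dominated convergence gives `∫ f`. Near the origin the substitution
`z = y / n²` turns the piece into `∫_{|y| < η n} f (y / n²) / (b² + n² (1 - ψ (y / n))) dy`;
there `n² (1 - ψ (y / n)) → a² y²` and stays `≥ a² y² / 2`, so dominated convergence gives
`f 0 ∫ dy / (b² + a² y²) = π f 0 / (a b)`.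
-/

lemma tendsto_const_div_natCast_sq_atTop (c : ℝ) :
    Tendsto (fun n : ℕ => c / (n : ℝ) ^ 2) atTop (𝓝 0) :=
  tendsto_const_nhds.div_atTop ((tendsto_pow_atTop two_ne_zero).comp tendsto_natCast_atTop_atTop)

lemma inv_sq_add_mul_sq_eq {b c : ℝ} (hb : 0 < b) (hc : 0 ≤ c) (y : ℝ) :
    (b ^ 2 + c * y ^ 2)⁻¹ = (b ^ 2)⁻¹ * (1 + (√c / b * y) ^ 2)⁻¹ := by
  rw [← mul_inv, mul_pow, div_pow, sq_sqrt hc]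
  field_simp

lemma integrable_inv_sq_add_mul_sq {b c : ℝ} (hb : 0 < b) (hc : 0 < c) :
    Integrable fun y : ℝ => (b ^ 2 + c * y ^ 2)⁻¹ := by
  simp_rw [inv_sq_add_mul_sq_eq hb hc.le]
  exact (integrable_inv_one_add_sq.comp_mul_left' (by positivity)).const_mul _

lemma integral_inv_sq_add_mul_sq {b c : ℝ} (hb : 0 < b) (hc : 0 < c) :
    ∫ y : ℝ, (b ^ 2 + c * y ^ 2)⁻¹ = π / (b * √c) := by
  have hk : 0 < √c / b := by positivity
  simp_rw [inv_sq_add_mul_sq_eq hb hc.le]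
  rw [integral_const_mul, Measure.integral_comp_mul_left (fun y => (1 + y ^ 2)⁻¹),
    integral_univ_inv_one_add_sq, abs_of_pos (inv_pos.2 hk), smul_eq_mul]
  field_simp

lemma Continuous.exists_pos_forall_le_one_sub {X : Type*} [TopologicalSpace X] {ψ : X → ℝ}
    {S : Set X} (hψ : Continuous ψ) (hinf : Tendsto ψ (cocompact X) (𝓝 0)) (hS : IsClosed S)
    (hlt : ∀ x ∈ S, ψ x < 1) : ∃ ρ > 0, ∀ x ∈ S, ψ x ≤ 1 - ρ := by
  obtain ⟨K, hK, hKsmall⟩ := mem_cocompact.1 (hinf (Iio_mem_nhds (by norm_num : (0 : ℝ) < 1 / 2)))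
  have hcpt : IsCompact (S ∩ {x | 1 / 2 ≤ ψ x}) :=
    hK.of_isClosed_subset (hS.inter (isClosed_le continuous_const hψ))
      fun x hx => by_contra fun hxK =>
        (hKsmall hxK : ψ x < 1 / 2).not_ge (show 1 / 2 ≤ ψ x from hx.2)
  rcases (S ∩ {x | 1 / 2 ≤ ψ x}).eq_empty_or_nonempty with hempty | hne
  · refine ⟨1 / 2, by norm_num, fun x hx => ?_⟩
    have : x ∉ S ∩ {x | 1 / 2 ≤ ψ x} := hempty ▸ Set.notMem_empty x
    have : ψ x < 1 / 2 := not_le.1 fun h => this ⟨hx, h⟩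
    linarith
  · obtain ⟨x₀, hx₀, hmax⟩ := hcpt.exists_isMaxOn hne hψ.continuousOn
    refine ⟨1 - ψ x₀, by linarith [hlt x₀ hx₀.1], fun x hx => ?_⟩
    by_cases hxψ : 1 / 2 ≤ ψ x
    · have : ψ x ≤ ψ x₀ := hmax ⟨hx, hxψ⟩
      linarith
    · have : 1 / 2 ≤ ψ x₀ := hx₀.2
      linarith

lemma eventually_mul_sq_le {q : ℝ → ℝ} {L c : ℝ}
    (hq : Tendsto (fun x => q x / x ^ 2) (𝓝[≠] 0) (𝓝 L)) (hc : c < L) (h0 : q 0 = 0) :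
    ∀ᶠ x in 𝓝 0, c * x ^ 2 ≤ q x := by
  filter_upwards [eventually_nhdsWithin_iff.1 (hq.eventually (eventually_gt_nhds hc))] with x hx
  rcases eq_or_ne x 0 with rfl | hx0
  · simp [h0]
  · exact ((lt_div_iff₀ (by positivity)).1 (hx hx0)).le

lemma tendsto_natCast_sq_mul_comp_div {q : ℝ → ℝ} {L : ℝ}
    (hq : Tendsto (fun x => q x / x ^ 2) (𝓝[≠] 0) (𝓝 L)) (h0 : q 0 = 0) (y : ℝ) :
    Tendsto (fun n : ℕ => (n : ℝ) ^ 2 * q (y / n)) atTop (𝓝 (L * y ^ 2)) := by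
  rcases eq_or_ne y 0 with rfl | hy
  · simp [h0]
  have hdiv : Tendsto (fun n : ℕ => y / n) atTop (𝓝[≠] 0) :=
    tendsto_nhdsWithin_iff.2 ⟨tendsto_const_div_atTop_nhds_zero_nat y,
      (eventually_ne_atTop 0).mono fun n hn => div_ne_zero hy (Nat.cast_ne_zero.2 hn)⟩
  refine ((hq.comp hdiv).mul_const (y ^ 2)).congr' ?_
  filter_upwards [eventually_ne_atTop 0] with n hn
  have : (n : ℝ) ≠ 0 := Nat.cast_ne_zero.2 hn
  simp only [Function.comp_apply]
  field_simp

lemma integral_indicator_near_eq (f ψ : ℝ → ℝ) (b η : ℝ) {n : ℕ} (hn : n ≠ 0) :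
    ∫ z : ℝ, {z : ℝ | |n * z| < η}.indicator (fun z => f z / (1 + b ^ 2 / n ^ 2 - ψ (n * z))) z =
      ∫ y : ℝ, {y : ℝ | |y / n| < η}.indicator
        (fun y => f (y / n ^ 2) * (b ^ 2 + n ^ 2 * (1 - ψ (y / n)))⁻¹) y := by
  have hn : (n : ℝ) ≠ 0 := Nat.cast_ne_zero.2 hn
  set G := {z : ℝ | |n * z| < η}.indicator (fun z => f z / (1 + b ^ 2 / n ^ 2 - ψ (n * z)))
  calc ∫ z, G z = ((n : ℝ) ^ 2)⁻¹ * ∫ y, G (y / n ^ 2) := by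
        rw [Measure.integral_comp_div, abs_of_pos (by positivity), smul_eq_mul,
          inv_mul_cancel_left₀ (by positivity)]
    _ = ∫ y, ((n : ℝ) ^ 2)⁻¹ * G (y / n ^ 2) := (integral_const_mul _ _).symm
    _ = _ := by
      congr 1 with y
      have hyn : (n : ℝ) * (y / n ^ 2) = y / n := by field_simp
      simp only [G, Set.indicator_apply, Set.mem_ofPred_eq, hyn]
      split_ifs
      · rw [show b ^ 2 + n ^ 2 * (1 - ψ (y / n)) = n ^ 2 * (1 + b ^ 2 / n ^ 2 - ψ (y / n)) by
          field_simp; ring, div_eq_mul_inv, mul_inv]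
        ring
      · simp

lemma tendsto_integral_indicator_near {f ψ : ℝ → ℝ} {a b c η C : ℝ} (ha : 0 < a) (hb : 0 < b)
    (hc : 0 < c) (hf : Continuous f) (hfC : ∀ z, ‖f z‖ ≤ C) (hψ : Measurable ψ) (h0 : ψ 0 = 1)
    (hquad : Tendsto (fun x => (1 - ψ x) / x ^ 2) (𝓝[≠] 0) (𝓝 (a ^ 2)))
    (hη0 : 0 < η) (hη : ∀ x, |x| < η → c * x ^ 2 ≤ 1 - ψ x) :
    Tendsto (fun n : ℕ => ∫ z : ℝ,
        {z : ℝ | |n * z| < η}.indicator (fun z => f z / (1 + b ^ 2 / n ^ 2 - ψ (n * z))) z)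
      atTop (𝓝 (π / (a * b) * f 0)) := by
  have hlim : Tendsto (fun n : ℕ => ∫ y : ℝ, {y : ℝ | |y / n| < η}.indicator
        (fun y => f (y / n ^ 2) * (b ^ 2 + n ^ 2 * (1 - ψ (y / n)))⁻¹) y)
      atTop (𝓝 (∫ y : ℝ, f 0 * (b ^ 2 + a ^ 2 * y ^ 2)⁻¹)) := by
    refine tendsto_integral_filter_of_dominated_convergence (fun y => C * (b ^ 2 + c * y ^ 2)⁻¹)
      (Eventually.of_forall fun n => ?_) ?_ ((integrable_inv_sq_add_mul_sq hb hc).const_mul C)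
      (ae_of_all _ fun y => ?_)
    · exact (((hf.measurable.comp (by fun_prop)).mul (by fun_prop)).indicator
        (measurableSet_lt (by fun_prop) measurable_const)).aestronglyMeasurable
    · filter_upwards [eventually_ne_atTop 0] with n hn
      refine ae_of_all _ fun y => ?_
      have hC : 0 ≤ C := (norm_nonneg _).trans (hfC 0)
      simp only [Set.indicator_apply, Set.mem_ofPred_eq]
      split_ifs with hy
      · have hn : (n : ℝ) ≠ 0 := Nat.cast_ne_zero.2 hn
        have hquad_le : c * y ^ 2 ≤ n ^ 2 * (1 - ψ (y / n)) :=
          calc c * y ^ 2 = n ^ 2 * (c * (y / n) ^ 2) := by field_simp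
            _ ≤ n ^ 2 * (1 - ψ (y / n)) := mul_le_mul_of_nonneg_left (hη _ hy) (by positivity)
        have hpos : 0 < b ^ 2 + c * y ^ 2 := by positivity
        have hD : 0 ≤ (b ^ 2 + n ^ 2 * (1 - ψ (y / n)))⁻¹ := inv_nonneg.2 (by linarith)
        rw [norm_mul, norm_of_nonneg hD]
        exact mul_le_mul (hfC _) (inv_anti₀ hpos (by linarith)) hD hC
      · simp only [norm_zero]
        positivity
    · have hin : ∀ᶠ n : ℕ in atTop, |y / n| < η := by
        have := (tendsto_const_div_atTop_nhds_zero_nat y).abs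
        rw [abs_zero] at this
        exact this.eventually (eventually_lt_nhds hη0)
      refine Tendsto.congr' (hin.mono fun n hn =>
        (Set.indicator_of_mem (show y ∈ {y : ℝ | |y / n| < η} from hn) _).symm) ?_
      exact ((hf.tendsto 0).comp (tendsto_const_div_natCast_sq_atTop y)).mul
        ((tendsto_const_nhds.add (tendsto_natCast_sq_mul_comp_div (q := fun x => 1 - ψ x) hquad
          (by simp [h0]) y)).inv₀ (by positivity))
  rw [integral_const_mul, integral_inv_sq_add_mul_sq hb (by positivity), sqrt_sq ha.le] at hlim
  rw [show π / (a * b) * f 0 = f 0 * (π / (b * a)) by ring]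
  refine hlim.congr' ?_
  filter_upwards [eventually_ne_atTop 0] with n hn
  exact (integral_indicator_near_eq f ψ b η hn).symm

lemma tendsto_integral_indicator_far {f ψ : ℝ → ℝ} {ε : ℕ → ℝ} {η ρ : ℝ} (hf : Integrable f)
    (hψ : Measurable ψ) (hinf : Tendsto ψ (cocompact ℝ) (𝓝 0)) (hρ : 0 < ρ)
    (hgap : ∀ x, η ≤ |x| → ψ x ≤ 1 - ρ) (hε : Tendsto ε atTop (𝓝 0)) (hε0 : ∀ n, 0 ≤ ε n) :
    Tendsto (fun n : ℕ => ∫ z : ℝ,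
        {z : ℝ | η ≤ |n * z|}.indicator (fun z => f z / (1 + ε n - ψ (n * z))) z)
      atTop (𝓝 (∫ z, f z)) := by
  refine tendsto_integral_of_dominated_convergence (fun z => ‖f z‖ / ρ) (fun n => ?_)
    (hf.norm.div_const ρ) (fun n => ae_of_all _ fun z => ?_)
    ((volume.ae_ne 0).mono fun z hz => ?_)
  · exact (hf.aestronglyMeasurable.div₀ (by fun_prop : Measurable fun z : ℝ =>
      1 + ε n - ψ (n * z)).aestronglyMeasurable).indicator
      (measurableSet_le measurable_const (by fun_prop))
  · simp only [Set.indicator_apply, Set.mem_ofPred_eq]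
    split_ifs with hz
    · have hD : ρ ≤ 1 + ε n - ψ (n * z) := by linarith [hgap _ hz, hε0 n]
      rw [norm_div, norm_of_nonneg (r := 1 + ε n - ψ (n * z)) (by linarith)]
      exact div_le_div_of_nonneg_left (norm_nonneg _) hρ hD
    · simp only [norm_zero]
      positivity
  · have hnz : Tendsto (fun n : ℕ => |(n : ℝ) * z|) atTop atTop := by
      simp_rw [abs_mul, Nat.abs_cast]
      exact tendsto_natCast_atTop_atTop.atTop_mul_const (abs_pos.2 hz)
    have hcocompact : Tendsto (fun n : ℕ => (n : ℝ) * z) atTop (cocompact ℝ) := by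
      rwa [← Metric.cobounded_eq_cocompact, ← tendsto_norm_atTop_iff_cobounded]
    refine Tendsto.congr' ((hnz.eventually_ge_atTop η).mono fun n hn =>
      (Set.indicator_of_mem (show z ∈ {z : ℝ | η ≤ |n * z|} from hn) _).symm) ?_
    have hD : Tendsto (fun n : ℕ => 1 + ε n - ψ (n * z)) atTop (𝓝 1) := by
      simpa using (tendsto_const_nhds.add hε).sub (hinf.comp hcocompact)
    simpa [div_eq_mul_inv] using tendsto_const_nhds.mul (hD.inv₀ one_ne_zero)

theorem stmt_1 (a b : ℝ) (ha : 0 < a) (hb : 0 < b) (ψ : ℝ → ℝ)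
    (hcont : Continuous ψ) (h0 : ψ 0 = 1) (hlt : ∀ x ≠ 0, |ψ x| < 1)
    (hinf : Tendsto ψ (Filter.cocompact ℝ) (𝓝 0))
    (hquad : Tendsto (fun x => (1 - ψ x) / x ^ 2) (𝓝[≠] 0) (𝓝 (a ^ 2))) :
    (∀ n : ℕ, 1 ≤ n → ∀ z : ℝ, 0 < 1 + b ^ 2 / (n : ℝ) ^ 2 - ψ (n * z)) ∧
    ∀ f : ℝ → ℝ, Continuous f → HasCompactSupport f →
      Tendsto (fun n : ℕ => ∫ z : ℝ, f z / (1 + b ^ 2 / (n : ℝ) ^ 2 - ψ (n * z)))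
        atTop (𝓝 ((∫ z : ℝ, f z) + (π / (a * b)) * f 0)) := by
  have hψ_le (x : ℝ) : ψ x ≤ 1 := by
    rcases eq_or_ne x 0 with rfl | hx
    · exact h0.le
    · exact (le_abs_self _).trans (hlt x hx).le
  have hpos (n : ℕ) (hn : 1 ≤ n) (z : ℝ) : 0 < 1 + b ^ 2 / (n : ℝ) ^ 2 - ψ (n * z) := by
    have : (0 : ℝ) < n := by exact_mod_cast hn
    linarith [hψ_le (n * z), show 0 < b ^ 2 / (n : ℝ) ^ 2 by positivity]
  refine ⟨hpos, fun f hf hfc => ?_⟩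
  obtain ⟨η, hη0, hη⟩ := Metric.eventually_nhds_iff.1 <| eventually_mul_sq_le
    (q := fun x => 1 - ψ x) hquad (half_lt_self (by positivity)) (by simp [h0])
  obtain ⟨ρ, hρ, hgap⟩ := hcont.exists_pos_forall_le_one_sub hinf
    (isClosed_le continuous_const continuous_abs)
    fun x (hx : η ≤ |x|) => (le_abs_self _).trans_lt (hlt x (abs_pos.1 (hη0.trans_le hx)))
  obtain ⟨C, hC⟩ := hf.bounded_above_of_compact_support hfc
  have hfar := tendsto_integral_indicator_far (hf.integrable_of_hasCompactSupport hfc)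
    hcont.measurable hinf hρ hgap (tendsto_const_div_natCast_sq_atTop (b ^ 2))
    fun n => by positivity
  have hnear := tendsto_integral_indicator_near ha hb (half_pos (pow_pos ha 2)) hf hC
    hcont.measurable h0 hquad hη0 fun x hx => hη (by simpa using hx)
  refine (hfar.add hnear).congr' ?_
  filter_upwards [eventually_ge_atTop 1] with n hn
  have hS : MeasurableSet {z : ℝ | η ≤ |n * z|} :=
    measurableSet_le measurable_const (by fun_prop)
  have hcompl : {z : ℝ | η ≤ |n * z|}ᶜ = {z : ℝ | |n * z| < η} := by ext; simp
  have hint : Integrable fun z => f z / (1 + b ^ 2 / (n : ℝ) ^ 2 - ψ (n * z)) :=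
    (hf.div (by fun_prop) fun z => (hpos n hn z).ne').integrable_of_hasCompactSupport
      (by simpa only [div_eq_mul_inv] using hfc.mul_right)
  rw [integral_indicator hS, ← hcompl, integral_indicator hS.compl, integral_add_compl hS hint]
end

section
/- Let L_N^0 be the set of continuous functions f : ℝ^N → ℝ that are linear on each cell of ℝ^N (a cell being the set of points realizing a fixed weak total ordering of coordinates) and invariant under simultaneous shifts f(x_1+h,…,x_N+h) = f(x). Let π = (π_1, π_2) be an ordered partition of {1,…,N} into two nonempty parts and U_π = {x ∈ ℝ^N : x_i > x_j for all i ∈ π_1, j ∈ π_2}. Then there exist functions f_1 : ℝ^{π_1} → ℝ and f_2 : ℝ^{π_2} → ℝ, each continuous and linear on cells, such that f(x) = f_1(x_i ; i ∈ π_1) + f_2(x_j ; j ∈ π_2) for all x ∈ U_π. -/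
/-- `f` is linear (affine) on each cell of `ℝ^ι`, where the cell of a point `x`
is the set of points whose coordinates are in the same weak order as those of `x`. -/
def LinOnCells {ι : Type*} [Fintype ι] (f : (ι → ℝ) → ℝ) : Prop :=
  ∀ x : ι → ℝ, ∃ (L : (ι → ℝ) →ₗ[ℝ] ℝ) (c : ℝ),
    ∀ y : ι → ℝ, (∀ i j, y i ≤ y j ↔ x i ≤ x j) → f y = L y + c

/-!
On `U_π` the order cell of a point is determined by the cells of its two blocks, and there are
finitely many cells, so a continuous function on a preconnected set that is constant on each cell
is constant. This gives the rectangle identity `f (a, b) - f (a, b') = f (a', b) - f (a', b')` on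
`U_π` in two steps: for `a`, `a'` in the same cell, `y ↦ f (a', y) - f (a, y)` is such a function,
because `(a, y) ↦ (a', y)` is a translation that stays in a cell; hence `a ↦ f (a, b) - f (a, b')`
is such a function as well. Two rectangle identities and shift invariance reduce `f x` to values at
points where one block of `x` is replaced by a constant below (above) the other block, and to
values on the ray through the indicator of `π₁`, along which `f` is affine.
-/

open Finset

variable {ι κ : Type*}

def SameOrder (x y : ι → ℝ) : Prop :=
  ∀ i j, x i ≤ x j ↔ y i ≤ y j

theorem SameOrder.symm {x y : ι → ℝ} (h : SameOrder x y) : SameOrder y x :=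
  fun i j => (h i j).symm

theorem SameOrder.trans {x y z : ι → ℝ} (hxy : SameOrder x y) (hyz : SameOrder y z) :
    SameOrder x z :=
  fun i j => (hxy i j).trans (hyz i j)

theorem IsPreconnected.apply_eq_of_sameOrder [Finite ι] {S : Set (ι → ℝ)}
    (hS : IsPreconnected S) {F : (ι → ℝ) → ℝ} (hF : ContinuousOn F S)
    (hFS : ∀ x ∈ S, ∀ y ∈ S, SameOrder x y → F x = F y) {x y : ι → ℝ} (hx : x ∈ S)
    (hy : y ∈ S) : F x = F y := by
  let cell : (ι → ℝ) → ι → ι → Prop := fun z i j => z i ≤ z j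
  have hfin : (F '' S).Finite := by
    refine (Set.finite_iUnion fun q =>
      (?_ : (F '' (S ∩ cell ⁻¹' {q})).Subsingleton).finite).subset ?_
    · rintro _ ⟨z, ⟨hz, rfl⟩, rfl⟩ _ ⟨z', ⟨hz', hzz'⟩, rfl⟩
      exact hFS z hz z' hz' fun i j => (congrFun₂ hzz' i j).symm.to_iff
    · rintro _ ⟨z, hz, rfl⟩
      exact Set.mem_iUnion.2 ⟨cell z, z, ⟨hz, rfl⟩, rfl⟩
  exact hS.constant_of_mapsTo hfin.isDiscrete hF (Set.mapsTo_image F S) hx hy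

section SplitCone

variable (s : Finset ι)

/-- The set `U_π` for `π = (s, sᶜ)`. -/
def splitCone : Set (ι → ℝ) :=
  {x | ∀ i ∈ s, ∀ j ∉ s, x j < x i}

theorem convex_splitCone : Convex ℝ (splitCone s) := by
  refine convex_iff_forall_pos.2 fun x hx y hy α β hα hβ _ i hi j hj => ?_
  simp only [Pi.add_apply, Pi.smul_apply, smul_eq_mul]
  linarith [mul_lt_mul_of_pos_left (hx i hi j hj) hα, mul_lt_mul_of_pos_left (hy i hi j hj) hβ]

variable [DecidableEq ι] {s}

theorem piecewise_mem_splitCone {a b : ι → ℝ} :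
    s.piecewise a b ∈ splitCone s ↔ ∀ i ∈ s, ∀ j ∉ s, b j < a i := by
  simp +contextual [splitCone, piecewise_eq_of_mem, piecewise_eq_of_notMem]

theorem piecewise_smul_add_smul (a a' b b' : ι → ℝ) (α β : ℝ) :
    s.piecewise (α • a + β • a') (α • b + β • b') =
      α • s.piecewise a b + β • s.piecewise a' b' := by
  ext i
  by_cases hi : i ∈ s <;> simp [hi]

@[fun_prop]
theorem Continuous.finset_piecewise {X : Type*} [TopologicalSpace X] {a b : X → ι → ℝ}
    (ha : Continuous a) (hb : Continuous b) : Continuous fun x => s.piecewise (a x) (b x) :=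
  continuous_pi fun i => by
    by_cases hi : i ∈ s <;>
      simp only [hi, piecewise_eq_of_mem, piecewise_eq_of_notMem, not_false_eq_true] <;> fun_prop

theorem convex_setOf_piecewise_left_mem_splitCone (b : ι → ℝ) :
    Convex ℝ {a | s.piecewise a b ∈ splitCone s} := by
  intro a ha a' ha' α β hα hβ hαβ
  have := convex_splitCone s ha ha' hα hβ hαβ
  rwa [← piecewise_smul_add_smul, Convex.combo_self hαβ] at this

theorem convex_setOf_piecewise_right_mem_splitCone (a : ι → ℝ) :
    Convex ℝ {b | s.piecewise a b ∈ splitCone s} := by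
  intro b hb b' hb' α β hα hβ hαβ
  have := convex_splitCone s hb hb' hα hβ hαβ
  rwa [← piecewise_smul_add_smul, Convex.combo_self hαβ] at this

theorem sameOrder_piecewise {a a' b : ι → ℝ} (ha : SameOrder a a')
    (hab : s.piecewise a b ∈ splitCone s) (ha'b : s.piecewise a' b ∈ splitCone s) :
    SameOrder (s.piecewise a b) (s.piecewise a' b) := by
  intro i j
  by_cases hi : i ∈ s <;> by_cases hj : j ∈ s
  · simpa [hi, hj] using ha i j
  · exact iff_of_false (hab i hi j hj).not_ge (ha'b i hi j hj).not_ge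
  · exact iff_of_true (hab j hj i hi).le (ha'b j hj i hi).le
  · simp [hi, hj]

end SplitCone

section Extend

variable [DecidableEq ι] {t : Finset ι}

def extendConst (t : Finset ι) (u : t → ℝ) (r : ℝ) : ι → ℝ :=
  fun i => if h : i ∈ t then u ⟨i, h⟩ else r

theorem extendConst_restrict (x : ι → ℝ) (r : ℝ) :
    extendConst t (fun i => x i) r = t.piecewise x fun _ => r := by
  ext i
  by_cases hi : i ∈ t <;> simp [extendConst, hi]

@[fun_prop]
theorem Continuous.extendConst {g : (t → ℝ) → ℝ} (hg : Continuous g) :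
    Continuous fun u => extendConst t u (g u) :=
  continuous_pi fun i => by
    by_cases hi : i ∈ t <;>
      simp only [_root_.extendConst, hi, dif_pos, dif_neg, not_false_eq_true] <;> fun_prop

theorem SameOrder.extendConst {u u' : t → ℝ} {r r' : ℝ} (hu : SameOrder u u')
    (hle : ∀ i, u i ≤ r ↔ u' i ≤ r') (hge : ∀ i, r ≤ u i ↔ r' ≤ u' i) :
    SameOrder (extendConst t u r) (extendConst t u' r') := by
  intro i j
  by_cases hi : i ∈ t <;> by_cases hj : j ∈ t <;>
    simp [_root_.extendConst, hi, hj, hu _ _, hle, hge]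

end Extend

section LinOnCells

variable [Fintype ι] [Fintype κ]

theorem linOnCells_const (c : ℝ) : LinOnCells fun _ : κ → ℝ => c :=
  fun _ => ⟨0, c, fun _ _ => (zero_add c).symm⟩

theorem linOnCells_apply (i : κ) : LinOnCells fun u : κ → ℝ => u i :=
  fun _ => ⟨LinearMap.proj i, 0, fun _ _ => (add_zero _).symm⟩

theorem LinOnCells.add {f g : (κ → ℝ) → ℝ} (hf : LinOnCells f) (hg : LinOnCells g) :
    LinOnCells fun u => f u + g u := by
  intro x
  obtain ⟨L, c, hL⟩ := hf x
  obtain ⟨L', c', hL'⟩ := hg x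
  refine ⟨L + L', c + c', fun y hy => ?_⟩
  simp only [hL y hy, hL' y hy, LinearMap.add_apply]
  ring

theorem LinOnCells.const_mul {f : (κ → ℝ) → ℝ} (hf : LinOnCells f) (a : ℝ) :
    LinOnCells fun u => a * f u := by
  intro x
  obtain ⟨L, c, hL⟩ := hf x
  refine ⟨a • L, a * c, fun y hy => ?_⟩
  simp only [hL y hy, LinearMap.smul_apply, smul_eq_mul]
  ring

theorem LinOnCells.sub {f g : (κ → ℝ) → ℝ} (hf : LinOnCells f) (hg : LinOnCells g) :
    LinOnCells fun u => f u - g u := by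
  simpa only [sub_eq_add_neg, neg_one_mul] using hf.add (hg.const_mul (-1))

theorem linOnCells_inf' [Nonempty κ] :
    LinOnCells fun u : κ → ℝ => univ.inf' univ_nonempty u := by
  intro x
  obtain ⟨i₀, -, hi₀⟩ := exists_min_image univ x univ_nonempty
  refine ⟨LinearMap.proj i₀, 0, fun y hy => ?_⟩
  rw [add_zero]
  exact le_antisymm (inf'_le _ (mem_univ i₀))
    (le_inf' _ _ fun i _ => (hy i₀ i).2 (hi₀ i (mem_univ i)))

theorem linOnCells_sup' [Nonempty κ] :
    LinOnCells fun u : κ → ℝ => univ.sup' univ_nonempty u := by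
  intro x
  obtain ⟨i₀, -, hi₀⟩ := exists_max_image univ x univ_nonempty
  refine ⟨LinearMap.proj i₀, 0, fun y hy => ?_⟩
  rw [add_zero]
  exact le_antisymm (sup'_le _ _ fun i _ => (hy i i₀).2 (hi₀ i (mem_univ i)))
    (le_sup' _ (mem_univ i₀))

theorem LinOnCells.comp {f : (ι → ℝ) → ℝ} (hf : LinOnCells f) {φ : (κ → ℝ) → ι → ℝ}
    (hφ : ∀ i, LinOnCells fun u => φ u i)
    (hφo : ∀ u v, SameOrder u v → SameOrder (φ u) (φ v)) : LinOnCells (f ∘ φ) := by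
  intro x
  obtain ⟨L, c, hL⟩ := hf (φ x)
  choose L' c' hL' using fun i => hφ i x
  refine ⟨L ∘ₗ LinearMap.pi L', L c' + c, fun y hy => ?_⟩
  have hφy : φ y = LinearMap.pi L' y + c' := funext fun i => hL' i y hy
  rw [Function.comp_apply, hL (φ y) (hφo y x hy), hφy, map_add, LinearMap.comp_apply, add_assoc]

theorem LinOnCells.comp_extendConst [DecidableEq ι] {t : Finset ι} {f : (ι → ℝ) → ℝ}
    (hf : LinOnCells f) {g : (t → ℝ) → ℝ} (hg : LinOnCells g)
    (hgo : ∀ u u', SameOrder u u' →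
      SameOrder (extendConst t u (g u)) (extendConst t u' (g u'))) :
    LinOnCells fun u => f (extendConst t u (g u)) := by
  refine hf.comp (φ := fun u => extendConst t u (g u)) (fun i => ?_) hgo
  by_cases hi : i ∈ t
  · simpa [extendConst, hi] using linOnCells_apply (⟨i, hi⟩ : t)
  · simpa [extendConst, hi] using hg

theorem LinOnCells.comp_extendConst_inf'_sub_one [DecidableEq ι] {t : Finset ι}
    {f : (ι → ℝ) → ℝ} (hf : LinOnCells f) [Nonempty t] :
    LinOnCells fun u : t → ℝ => f (extendConst t u (univ.inf' univ_nonempty u - 1)) := by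
  have hlt (u : t → ℝ) (i : t) : univ.inf' univ_nonempty u - 1 < u i := by
    linarith [inf'_le u (mem_univ i)]
  refine hf.comp_extendConst (linOnCells_inf'.sub (linOnCells_const 1)) fun u u' h =>
    h.extendConst (fun i => iff_of_false (hlt u i).not_ge (hlt u' i).not_ge)
      fun i => iff_of_true (hlt u i).le (hlt u' i).le

theorem LinOnCells.comp_extendConst_sup'_add_one [DecidableEq ι] {t : Finset ι}
    {f : (ι → ℝ) → ℝ} (hf : LinOnCells f) [Nonempty t] :
    LinOnCells fun u : t → ℝ => f (extendConst t u (univ.sup' univ_nonempty u + 1)) := by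
  have hlt (u : t → ℝ) (i : t) : u i < univ.sup' univ_nonempty u + 1 := by
    linarith [le_sup' u (mem_univ i)]
  refine hf.comp_extendConst (linOnCells_sup'.add (linOnCells_const 1)) fun u u' h =>
    h.extendConst (fun i => iff_of_true (hlt u i).le (hlt u' i).le)
      fun i => iff_of_false (hlt u i).not_ge (hlt u' i).not_ge

theorem LinOnCells.exists_affine_on_ray {f : (ι → ℝ) → ℝ} (hf : LinOnCells f) (w : ι → ℝ) :
    ∃ α β : ℝ, ∀ t > 0, f (t • w) = α * t + β := by
  obtain ⟨L, c, hL⟩ := hf w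
  refine ⟨L w, c, fun t ht => ?_⟩
  rw [hL (t • w) fun i j => by simp only [Pi.smul_apply, smul_eq_mul, mul_le_mul_iff_right₀ ht],
    map_smul, smul_eq_mul, mul_comm]

theorem LinOnCells.apply_add_sub_apply_eq {f : (ι → ℝ) → ℝ} (hfc : Continuous f)
    (hf : LinOnCells f) {S : Set (ι → ℝ)} (hS : IsPreconnected S) {w : ι → ℝ}
    (hw : ∀ z ∈ S, SameOrder (z + w) z) {x y : ι → ℝ} (hx : x ∈ S) (hy : y ∈ S) :
    f (x + w) - f x = f (y + w) - f y := by
  refine hS.apply_eq_of_sameOrder (F := fun z => f (z + w) - f z) (by fun_prop) ?_ hx hy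
  intro z hz z' hz' hzz'
  obtain ⟨L, c, hL⟩ := hf z
  simp only [hL z' hzz'.symm, hL z fun _ _ => Iff.rfl, hL _ (hw z hz),
    hL _ ((hw z' hz').trans hzz'.symm), map_add]
  ring

variable [DecidableEq ι] {s : Finset ι} {f : (ι → ℝ) → ℝ}

theorem LinOnCells.apply_piecewise_sub_eq_of_sameOrder (hfc : Continuous f) (hf : LinOnCells f)
    {a a' b b' : ι → ℝ} (ha : SameOrder a a')
    (hab : s.piecewise a b ∈ splitCone s) (hab' : s.piecewise a b' ∈ splitCone s)
    (ha'b : s.piecewise a' b ∈ splitCone s) (ha'b' : s.piecewise a' b' ∈ splitCone s) :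
    f (s.piecewise a b) - f (s.piecewise a b') =
      f (s.piecewise a' b) - f (s.piecewise a' b') := by
  have hw : ∀ y, s.piecewise a y + s.piecewise (a' - a) 0 = s.piecewise a' y := fun y => by
    ext i
    by_cases hi : i ∈ s <;> simp [hi]
  have hS : IsPreconnected ((s.piecewise a ·) ''
      ({y | s.piecewise a y ∈ splitCone s} ∩ {y | s.piecewise a' y ∈ splitCone s})) :=
    ((convex_setOf_piecewise_right_mem_splitCone a).inter
      (convex_setOf_piecewise_right_mem_splitCone a')).isPreconnected.image _ (by fun_prop)
  have := hf.apply_add_sub_apply_eq hfc hS (w := s.piecewise (a' - a) 0) ?_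
    (Set.mem_image_of_mem _ ⟨hab, ha'b⟩) (Set.mem_image_of_mem _ ⟨hab', ha'b'⟩)
  · simp only [hw] at this
    linarith
  · rintro _ ⟨y, ⟨hy, hy'⟩, rfl⟩
    rw [hw]
    exact (sameOrder_piecewise ha hy hy').symm

theorem LinOnCells.apply_piecewise_sub_eq (hfc : Continuous f) (hf : LinOnCells f)
    {a a' b b' : ι → ℝ}
    (hab : s.piecewise a b ∈ splitCone s) (hab' : s.piecewise a b' ∈ splitCone s)
    (ha'b : s.piecewise a' b ∈ splitCone s) (ha'b' : s.piecewise a' b' ∈ splitCone s) :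
    f (s.piecewise a b) - f (s.piecewise a b') =
      f (s.piecewise a' b) - f (s.piecewise a' b') :=
  ((convex_setOf_piecewise_left_mem_splitCone b).inter
    (convex_setOf_piecewise_left_mem_splitCone b')).isPreconnected.apply_eq_of_sameOrder
    (F := fun x => f (s.piecewise x b) - f (s.piecewise x b')) (by fun_prop)
    (fun _ hx _ hx' hxx' => hf.apply_piecewise_sub_eq_of_sameOrder hfc hxx' hx.1 hx.2 hx'.1 hx'.2)
    ⟨hab, hab'⟩ ⟨ha'b, ha'b'⟩

theorem LinOnCells.apply_eq_split_of_bounds (hfc : Continuous f) (hf : LinOnCells f)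
    (hshift : ∀ (x : ι → ℝ) (h : ℝ), f (fun i => x i + h) = f x) {α β : ℝ}
    (hray : ∀ t > 0, f (t • s.piecewise (1 : ι → ℝ) 0) = α * t + β) {x : ι → ℝ} {m M : ℝ}
    (hm : ∀ i ∈ s, m ≤ x i) (hM : ∀ j ∉ s, x j ≤ M) (hMm : M < m) :
    f x = (f (s.piecewise x fun _ => m - 1) + α * m) +
      (f (s.piecewise (fun _ => M + 1) x) - α * M - (2 * α + β)) := by
  have hconst : ∀ r r' : ℝ, r' < r →
      f (s.piecewise (fun _ => r) fun _ => r') = α * (r - r') + β := by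
    intro r r' hr
    have : s.piecewise (fun _ => r) (fun _ => r') =
        fun i => ((r - r') • s.piecewise (1 : ι → ℝ) 0) i + r' := by
      ext i
      by_cases hi : i ∈ s <;> simp [hi]
    rw [this, hshift, hray _ (sub_pos.2 hr)]
  have mem (a b : ι → ℝ) (h : ∀ i ∈ s, ∀ j ∉ s, b j < a i) : s.piecewise a b ∈ splitCone s :=
    piecewise_mem_splitCone.2 h
  have h₁ := hf.apply_piecewise_sub_eq hfc
    (mem x x fun i hi j hj => by linarith [hm i hi, hM j hj])
    (mem x (fun _ => M - 1) fun i hi _ _ => by linarith [hm i hi])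
    (mem (fun _ => M + 1) x fun _ _ j hj => by linarith [hM j hj])
    (mem (fun _ => M + 1) (fun _ => M - 1) fun _ _ _ _ => by linarith)
  have h₂ := hf.apply_piecewise_sub_eq hfc
    (mem x (fun _ => M - 1) fun i hi _ _ => by linarith [hm i hi])
    (mem x (fun _ => m - 1) fun i hi _ _ => by linarith [hm i hi])
    (mem (fun _ => m) (fun _ => M - 1) fun _ _ _ _ => by linarith)
    (mem (fun _ => m) (fun _ => m - 1) fun _ _ _ _ => by linarith)
  rw [piecewise_same, hconst _ _ (by linarith)] at h₁
  rw [hconst _ _ (by linarith), hconst _ _ (by linarith)] at h₂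
  linarith

end LinOnCells

theorem stmt_7 (N : ℕ) (f : (Fin N → ℝ) → ℝ)
    (hfc : Continuous f) (hflin : LinOnCells f)
    (hshift : ∀ (x : Fin N → ℝ) (h : ℝ), f (fun i => x i + h) = f x)
    (π₁ π₂ : Finset (Fin N)) (h₁ : π₁.Nonempty) (h₂ : π₂.Nonempty)
    (hdisj : Disjoint π₁ π₂) (hunion : π₁ ∪ π₂ = Finset.univ) :
    ∃ (f₁ : (π₁ → ℝ) → ℝ) (f₂ : (π₂ → ℝ) → ℝ),
      Continuous f₁ ∧ LinOnCells f₁ ∧ Continuous f₂ ∧ LinOnCells f₂ ∧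
      ∀ x : Fin N → ℝ, (∀ i ∈ π₁, ∀ j ∈ π₂, x j < x i) →
        f x = f₁ (fun i => x i) + f₂ (fun j => x j) := by
  obtain rfl : π₁ᶜ = π₂ := IsCompl.compl_eq ⟨hdisj, codisjoint_iff.2 hunion⟩
  have := h₁.to_subtype
  have := h₂.to_subtype
  obtain ⟨α, β, hray⟩ := hflin.exists_affine_on_ray (π₁.piecewise (1 : Fin N → ℝ) 0)
  refine ⟨fun u => f (extendConst π₁ u (univ.inf' univ_nonempty u - 1)) +
      α * univ.inf' univ_nonempty u,
    fun v => f (extendConst π₁ᶜ v (univ.sup' univ_nonempty v + 1)) -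
      α * univ.sup' univ_nonempty v - (2 * α + β),
    by fun_prop, hflin.comp_extendConst_inf'_sub_one.add (linOnCells_inf'.const_mul α),
    by fun_prop, (hflin.comp_extendConst_sup'_add_one.sub (linOnCells_sup'.const_mul α)).sub
      (linOnCells_const _), fun x hx => ?_⟩
  obtain ⟨i₀, -, hi₀⟩ := exists_mem_eq_inf' univ_nonempty fun i : π₁ => x i
  obtain ⟨j₀, -, hj₀⟩ := exists_mem_eq_sup' univ_nonempty fun j : ↥π₁ᶜ => x j
  beta_reduce
  rw [extendConst_restrict, extendConst_restrict, piecewise_compl]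
  exact hflin.apply_eq_split_of_bounds hfc hshift hray
    (fun i hi => inf'_le (fun i : π₁ => x i) (mem_univ (⟨i, hi⟩ : π₁)))
    (fun j hj => le_sup' (fun j : ↥π₁ᶜ => x j) (mem_univ (⟨j, mem_compl.2 hj⟩ : ↥π₁ᶜ)))
    (by rw [hi₀, hj₀]; exact hx _ i₀.2 _ j₀.2)
end

section
/- Let ψ : ℝ → ℝ be continuous with ψ(0)=1, |ψ(x)| < 1 for x ≠ 0, ψ(x) → 0 as |x| → ∞, and (1 - ψ(x))/x² → a² as x → 0 with a > 0. Let b > 0 and define f_n(z) = 𝟙(c/n² < |z| < c') · (1 + b² n^{-2} - ψ(n z))^{-1}. Then for every ε > 0 there exist c > 0, c' > 0, and n_0 such that ∫_ℝ f_n(z) dz ≤ ε for all n ≥ n_0. -/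
/-!
Near the origin `1 - ψ x ≥ (a²/2) x²`, and away from it `ψ ≤ ρ < 1` by continuity, compactness
and the decay of `ψ` at infinity. Hence `(1 + β - ψ x)⁻¹ ≤ 2 / (a² x²) + (1 - ρ)⁻¹` for every
`x ≠ 0` and `β ≥ 0`. With `x = n z`, the first term integrates over `|z| > c / n²` to `4 / (a² c)`,
independently of `n`, and the second over `|z| < c'` to `2 c' / (1 - ρ)`; take `c` large and `c'`
small.
-/

open MeasureTheory Real Filter Topology Set

theorem exists_mul_sq_le_of_tendsto_div_sq {g : ℝ → ℝ} {L q : ℝ}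
    (h : Tendsto (fun x => g x / x ^ 2) (𝓝[≠] 0) (𝓝 L)) (hq : q < L) :
    ∃ δ > 0, ∀ x, x ≠ 0 → |x| < δ → q * x ^ 2 ≤ g x := by
  obtain ⟨δ, hδ, hball⟩ :=
    Metric.eventually_nhds_iff.mp (eventually_nhdsWithin_iff.mp (h.eventually (lt_mem_nhds hq)))
  refine ⟨δ, hδ, fun x hx hxδ => ?_⟩
  have hq' : q < g x / x ^ 2 := hball (by simpa [Real.dist_eq] using hxδ) hx
  exact (lt_div_iff₀ (by positivity)).mp hq' |>.le

theorem exists_lt_forall_le_of_tendsto_cocompact {X : Type*} [TopologicalSpace X] {f : X → ℝ}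
    {s : Set X} {l r : ℝ} (hf : Continuous f) (hs : IsClosed s)
    (hlim : Tendsto f (cocompact X) (𝓝 l)) (hlr : l < r) (hlt : ∀ x ∈ s, f x < r) :
    ∃ ρ < r, ∀ x ∈ s, f x ≤ ρ := by
  obtain ⟨m, hlm, hmr⟩ := exists_between hlr
  set K := s ∩ f ⁻¹' Ici m
  have hK : IsCompact K := by
    obtain ⟨t, ht, hsub⟩ := mem_cocompact'.mp (hlim.eventually (gt_mem_nhds hlm))
    exact ht.of_isClosed_subset (hs.inter (isClosed_Ici.preimage hf))
      fun x hx => hsub (not_lt.mpr (show m ≤ f x from hx.2))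
  rcases K.eq_empty_or_nonempty with hK0 | hKne
  · exact ⟨m, hmr, fun x hx => le_of_not_ge fun h => hK0.subset ⟨hx, h⟩⟩
  obtain ⟨x₀, hx₀, hmax⟩ := hK.exists_isMaxOn hKne hf.continuousOn
  refine ⟨max (f x₀) m, max_lt (hlt x₀ hx₀.1) hmr, fun x hx => ?_⟩
  by_cases h : m ≤ f x
  · exact le_max_of_le_left (hmax ⟨hx, h⟩)
  · exact le_max_of_le_right (not_le.mp h).le

theorem one_add_sub_pos_and_inv_le {ψ : ℝ → ℝ} {q δ ρ β x : ℝ} (hq : 0 < q) (hρ : ρ < 1)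
    (hβ : 0 ≤ β) (hnear : ∀ x, x ≠ 0 → |x| < δ → q * x ^ 2 ≤ 1 - ψ x)
    (hfar : ∀ x, δ ≤ |x| → ψ x ≤ ρ) (hx : x ≠ 0) :
    0 < 1 + β - ψ x ∧ (1 + β - ψ x)⁻¹ ≤ (q * x ^ 2)⁻¹ + (1 - ρ)⁻¹ := by
  have hnear_pos : 0 < q * x ^ 2 := by positivity
  have hfar_pos : 0 < 1 - ρ := by linarith
  rcases lt_or_ge |x| δ with hxδ | hxδ
  · have hle : q * x ^ 2 ≤ 1 + β - ψ x := by linarith [hnear x hx hxδ]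
    exact ⟨hnear_pos.trans_le hle,
      (inv_anti₀ hnear_pos hle).trans (le_add_of_nonneg_right (inv_pos.mpr hfar_pos).le)⟩
  · have hle : 1 - ρ ≤ 1 + β - ψ x := by linarith [hfar x hxδ]
    exact ⟨hfar_pos.trans_le hle,
      (inv_anti₀ hfar_pos hle).trans (le_add_of_nonneg_left (inv_pos.mpr hnear_pos).le)⟩

theorem indicator_abs_gt_inv_sq_eq {t : ℝ} (ht : 0 ≤ t) (z : ℝ) :
    {z : ℝ | t < |z|}.indicator (fun z => (z ^ 2)⁻¹) z =
      (Ioi t).indicator (fun r => (r ^ 2)⁻¹) z + (Ioi t).indicator (fun r => (r ^ 2)⁻¹) (-z) := by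
  rcases le_or_gt 0 z with hz | hz
  · have : ¬ t < -z := by linarith
    simp [indicator, abs_of_nonneg hz, this]
  · have : ¬ t < z := by linarith
    simp [indicator, abs_of_neg hz, this]

theorem integrableOn_Ioi_inv_sq {t : ℝ} (ht : 0 < t) :
    IntegrableOn (fun r : ℝ => (r ^ 2)⁻¹) (Ioi t) := by
  simpa only [rpow_neg_ofNat, zpow_neg, zpow_ofNat] using
    integrableOn_Ioi_rpow_of_lt (by norm_num : (-2 : ℝ) < -1) ht

theorem integrable_indicator_abs_gt_inv_sq {t : ℝ} (ht : 0 < t) :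
    Integrable ({z : ℝ | t < |z|}.indicator fun z => (z ^ 2)⁻¹) := by
  have hint := (integrable_indicator_iff measurableSet_Ioi).mpr (integrableOn_Ioi_inv_sq ht)
  rw [funext (indicator_abs_gt_inv_sq_eq ht.le)]
  exact hint.add hint.comp_neg

theorem integral_indicator_abs_gt_inv_sq {t : ℝ} (ht : 0 < t) :
    ∫ z, {z : ℝ | t < |z|}.indicator (fun z => (z ^ 2)⁻¹) z = 2 / t := by
  have hint := (integrable_indicator_iff measurableSet_Ioi).mpr (integrableOn_Ioi_inv_sq ht)
  have hIoi : ∫ r in Ioi t, (r ^ 2)⁻¹ = t⁻¹ := by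
    have h := integral_Ioi_rpow_of_lt (by norm_num : (-2 : ℝ) < -1) ht
    norm_num [rpow_neg_ofNat, rpow_neg_one] at h
    exact h
  rw [funext (indicator_abs_gt_inv_sq_eq ht.le), integral_add hint hint.comp_neg,
    integral_neg_eq_self, integral_indicator measurableSet_Ioi, hIoi]
  ring

theorem integral_annulus_le {f : ℝ → ℝ} {t r A M : ℝ} (ht : 0 < t) (hr : 0 ≤ r) (hA : 0 ≤ A)
    (hM : 0 ≤ M) (hf : ∀ z, t < |z| → |z| < r → 0 ≤ f z ∧ f z ≤ A * (z ^ 2)⁻¹ + M) :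
    ∫ z, (if t < |z| ∧ |z| < r then f z else 0) ≤ 2 * A / t + 2 * r * M := by
  set near := {z : ℝ | t < |z|}.indicator fun z => (z ^ 2)⁻¹
  set far := (Metric.ball (0 : ℝ) r).indicator fun _ => M
  have hnear := integrable_indicator_abs_gt_inv_sq ht
  have hfar : Integrable far :=
    (integrable_indicator_iff measurableSet_ball).mpr (integrableOn_const measure_ball_lt_top.ne)
  have hbound : ∀ z, (if t < |z| ∧ |z| < r then f z else 0) ≤ A * near z + far z := by
    intro z
    split_ifs with hz
    · have hzr : z ∈ Metric.ball (0 : ℝ) r := by simpa using hz.2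
      simpa [near, far, indicator_of_mem hzr, hz.1] using (hf z hz.1 hz.2).2
    · exact add_nonneg (mul_nonneg hA (indicator_nonneg (fun z _ => by positivity) z))
        (indicator_nonneg (fun _ _ => hM) z)
  have hnonneg : ∀ z, 0 ≤ (if t < |z| ∧ |z| < r then f z else 0) := by
    intro z
    split_ifs with hz
    exacts [(hf z hz.1 hz.2).1, le_rfl]
  calc ∫ z, (if t < |z| ∧ |z| < r then f z else 0)
      ≤ ∫ z, (A * near z + far z) :=
        integral_mono_of_nonneg (.of_forall hnonneg) ((hnear.const_mul A).add hfar)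
          (.of_forall hbound)
    _ = 2 * A / t + 2 * r * M := by
      rw [integral_add (hnear.const_mul A) hfar, integral_const_mul,
        integral_indicator_abs_gt_inv_sq ht, integral_indicator measurableSet_ball,
        setIntegral_const, measureReal_def, Real.volume_ball, ENNReal.toReal_ofReal (by linarith),
        smul_eq_mul]
      ring

theorem stmt_11_general (a b : ℝ) (ha : 0 < a) (ψ : ℝ → ℝ)
    (hcont : Continuous ψ) (hlt : ∀ x ≠ 0, |ψ x| < 1)
    (hinf : Tendsto ψ (Filter.cocompact ℝ) (𝓝 0))
    (hquad : Tendsto (fun x => (1 - ψ x) / x ^ 2) (𝓝[≠] 0) (𝓝 (a ^ 2))) :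
    ∀ ε > (0 : ℝ), ∃ c > (0 : ℝ), ∃ c' > (0 : ℝ), ∃ n₀ : ℕ, ∀ n : ℕ, n₀ ≤ n →
      (∫ z : ℝ, if c / (n : ℝ) ^ 2 < |z| ∧ |z| < c'
        then (1 + b ^ 2 / (n : ℝ) ^ 2 - ψ (n * z))⁻¹ else 0) ≤ ε := by
  intro ε hε
  set q := a ^ 2 / 2
  have hq : 0 < q := by positivity
  obtain ⟨δ, hδ, hnear⟩ := exists_mul_sq_le_of_tendsto_div_sq hquad (half_lt_self (by positivity))
  obtain ⟨ρ, hρ, hfar⟩ := exists_lt_forall_le_of_tendsto_cocompact hcont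
    (isClosed_le continuous_const continuous_abs) hinf one_pos
    fun x (hx : δ ≤ |x|) => (abs_lt.mp (hlt x (abs_pos.mp (hδ.trans_le hx)))).2
  set M := (1 - ρ)⁻¹
  have hM : 0 < M := inv_pos.mpr (by linarith)
  refine ⟨4 / (q * ε), by positivity, ε / (4 * M), by positivity, 1, fun n hn => ?_⟩
  have hn : (0 : ℝ) < n := by exact_mod_cast hn
  calc _ ≤ 2 * (q * n ^ 2)⁻¹ / (4 / (q * ε) / n ^ 2) + 2 * (ε / (4 * M)) * M := by
        refine integral_annulus_le (by positivity) (by positivity) (by positivity) hM.le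
          fun z hz _ => ?_
        have hz : z ≠ 0 := abs_pos.mp ((by positivity : (0 : ℝ) < _).trans hz)
        have key := one_add_sub_pos_and_inv_le (β := b ^ 2 / n ^ 2) hq hρ (by positivity)
          hnear hfar (mul_ne_zero hn.ne' hz)
        refine ⟨inv_nonneg.mpr key.1.le, key.2.trans_eq ?_⟩
        rw [mul_pow, ← mul_assoc, mul_inv]
    _ = ε := by field_simp; ring

theorem stmt_11 (a b : ℝ) (ha : 0 < a) (hb : 0 < b) (ψ : ℝ → ℝ)
    (hcont : Continuous ψ) (h0 : ψ 0 = 1) (hlt : ∀ x ≠ 0, |ψ x| < 1)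
    (hinf : Tendsto ψ (Filter.cocompact ℝ) (𝓝 0))
    (hquad : Tendsto (fun x => (1 - ψ x) / x ^ 2) (𝓝[≠] 0) (𝓝 (a ^ 2))) :
    ∀ ε > (0 : ℝ), ∃ c > (0 : ℝ), ∃ c' > (0 : ℝ), ∃ n₀ : ℕ, ∀ n : ℕ, n₀ ≤ n →
      (∫ z : ℝ, if c / (n : ℝ) ^ 2 < |z| ∧ |z| < c'
        then (1 + b ^ 2 / (n : ℝ) ^ 2 - ψ (n * z))⁻¹ else 0) ≤ ε :=
  stmt_11_general a b ha ψ hcont hlt hinf hquad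
end

section
/- Let f : ℝ^N → ℝ be continuous, positively homogeneous of degree 1 (f(λx) = λ f(x) for λ ≥ 0), and linear on each cell of ℝ^N. Then there exists c > 0 such that g(x) = c Σ_{i<j} |x_i − x_j| + f(x) is a convex function on ℝ^N, provided f is shift-invariant (f(x+h𝟏) = f(x)). -/
/-!
Write `S x = ∑_{i<j} |x i - x j|`. Being continuous and affine on each of the finitely many
cells, `f` is `M`-Lipschitz for the sup norm, `M` the largest norm of its linear pieces: along a
segment, `f` has a right derivative at every point, namely the slope of the piece on the cell
the segment enters next.

Fix `z`, and let `L + c` be the piece of `f` on the cell of `z`. The linear form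
`σ_z x = ∑_{i<j} sign (z i - z j) (x i - x j)` satisfies `σ_z ≤ S` and `σ_z z = S z`, and the gap
`S x - σ_z x` dominates the sup distance from `x` to the point `p i = max_{z j ≤ z i} x j` of
the closed cell of `z`, on which `f = L + c` by continuity. Comparing through `p`,
`L x + c - f x ≤ 2 M (S x - σ_z x)`. So for `C ≥ 2 M` the affine function `C σ_z + L + c`
supports `C S + f` at `z`, and a function with a supporting affine minorant at every point is
convex.
-/

open Finset Filter Topology Set

theorem convexOn_univ_of_forall_exists_linear_add_const_le {E : Type*} [AddCommGroup E]
    [Module ℝ E] {g : E → ℝ}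
    (h : ∀ w, ∃ (φ : E →ₗ[ℝ] ℝ) (k : ℝ), φ w + k = g w ∧ ∀ x, φ x + k ≤ g x) :
    ConvexOn ℝ univ g := by
  refine ⟨convex_univ, fun x _ y _ a b ha hb hab => ?_⟩
  obtain ⟨φ, k, hw, hle⟩ := h (a • x + b • y)
  calc g (a • x + b • y) = a * (φ x + k) + b * (φ y + k) := by
        rw [← hw, map_add, map_smul, map_smul, smul_eq_mul, smul_eq_mul]
        linear_combination (-k) * hab
    _ ≤ a • g x + b • g y := by
        simp only [smul_eq_mul]
        gcongr
        exacts [hle x, hle y]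

theorem eq_of_eventuallyEq_nhdsGT {α : Type*} [TopologicalSpace α] [T2Space α] {g h : ℝ → α}
    {t : ℝ} (hg : ContinuousAt g t) (hh : ContinuousAt h t) (hgh : g =ᶠ[𝓝[>] t] h) :
    g t = h t :=
  tendsto_nhds_unique ((hg.tendsto.mono_left nhdsWithin_le_nhds).congr' hgh)
    (hh.tendsto.mono_left nhdsWithin_le_nhds)

theorem exists_eventually_add_mul_le_add_mul_iff (α β γ δ t : ℝ) :
    ∃ P : Prop, ∀ᶠ s in 𝓝[>] t, (α + s * β ≤ γ + s * δ ↔ P) := by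
  have hcont : ∀ a b : ℝ, ContinuousAt (fun s => a + s * b) t := fun a b => by fun_prop
  rcases lt_trichotomy (α + t * β) (γ + t * δ) with h | h | h
  · refine ⟨True, ?_⟩
    filter_upwards [nhdsWithin_le_nhds ((hcont α β).eventually_lt (hcont γ δ) h)] with s hs
    exact iff_true_intro hs.le
  · refine ⟨β ≤ δ, ?_⟩
    filter_upwards [self_mem_nhdsWithin] with s (hs : t < s)
    constructor <;> intro h' <;> nlinarith
  · refine ⟨False, ?_⟩
    filter_upwards [nhdsWithin_le_nhds ((hcont γ δ).eventually_lt (hcont α β) h)] with s hs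
    exact iff_false_intro hs.not_ge

theorem abs_sub_sign_mul_nonneg (u d : ℝ) : 0 ≤ |d| - SignType.sign u * d := by
  rcases lt_trichotomy u 0 with hu | rfl | hu
  · simp only [sign_neg hu, SignType.coe_neg_one, neg_one_mul, sub_neg_eq_add]
    linarith [neg_abs_le d]
  · simp
  · simpa [sign_pos hu] using le_abs_self d

section Cells

variable {ι : Type*} [Fintype ι]

def LinOnCellsWithBound (M : ℝ) (f : (ι → ℝ) → ℝ) : Prop :=
  ∀ x : ι → ℝ, ∃ (L : (ι → ℝ) →L[ℝ] ℝ) (c : ℝ), ‖L‖ ≤ M ∧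
    ∀ y : ι → ℝ, (∀ i j, y i ≤ y j ↔ x i ≤ x j) → f y = L y + c

theorem LinOnCells.exists_linOnCellsWithBound {f : (ι → ℝ) → ℝ} (hf : LinOnCells f) :
    ∃ M, LinOnCellsWithBound M f := by
  classical
  choose L c hL using hf
  -- a cell is determined by its pattern, and there are finitely many patterns
  let pattern : (ι → ℝ) → Set (ι × ι) := fun x => {p | x p.1 ≤ x p.2}
  let rep : Set (ι × ι) → ι → ℝ := fun P => if h : ∃ x, pattern x = P then h.choose else 0
  have hrep : ∀ x, pattern (rep (pattern x)) = pattern x := fun x => by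
    have h : ∃ y, pattern y = pattern x := ⟨x, rfl⟩
    simp only [rep, dif_pos h]
    exact h.choose_spec
  let norms : Set (ι × ι) → ℝ := fun P => ‖LinearMap.toContinuousLinearMap (L (rep P))‖
  refine ⟨⨆ P, norms P, fun x =>
    ⟨_, c (rep (pattern x)), le_ciSup (Finite.bddAbove_range norms) (pattern x), fun y hy => ?_⟩⟩
  simpa using hL _ y fun i j => (hy i j).trans (Set.ext_iff.1 (hrep x) (i, j)).symm

variable {M : ℝ} {f : (ι → ℝ) → ℝ}

theorem LinOnCellsWithBound.nonneg (hf : LinOnCellsWithBound M f) : 0 ≤ M := by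
  obtain ⟨L, -, hLM, -⟩ := hf 0
  exact (norm_nonneg L).trans hLM

theorem exists_eventually_cell_eq (a d : ι → ℝ) (t : ℝ) :
    ∃ u : ι → ℝ, ∀ᶠ s in 𝓝[>] t, ∀ i j, (a + s • d) i ≤ (a + s • d) j ↔ u i ≤ u j := by
  choose P hP using fun i j => exists_eventually_add_mul_le_add_mul_iff (a i) (d i) (a j) (d j) t
  have h : ∀ᶠ s in 𝓝[>] t, ∀ i j, (a + s • d) i ≤ (a + s • d) j ↔ P i j :=
    eventually_all.2 fun i => eventually_all.2 fun j => by simpa using hP i j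
  obtain ⟨s₀, hs₀⟩ := h.exists
  exact ⟨a + s₀ • d, h.mono fun s hs i j => (hs i j).trans (hs₀ i j).symm⟩

theorem LinOnCellsWithBound.exists_hasDerivWithinAt_Ici (hf : LinOnCellsWithBound M f)
    (hc : Continuous f) (a d : ι → ℝ) (t : ℝ) :
    ∃ L : (ι → ℝ) →L[ℝ] ℝ, ‖L‖ ≤ M ∧
      HasDerivWithinAt (fun s => f (a + s • d)) (L d) (Ici t) t := by
  obtain ⟨u, hu⟩ := exists_eventually_cell_eq a d t
  obtain ⟨L, c, hLM, hL⟩ := hf u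
  have hline : HasDerivAt (fun s : ℝ => L (a + s • d) + c) (L d) t := by
    have := ((hasDerivAt_id t).smul_const d).const_add a
    simpa using (L.hasFDerivAt.comp_hasDerivAt t this).add_const c
  have heq : (fun s => f (a + s • d)) =ᶠ[𝓝[>] t] fun s => L (a + s • d) + c :=
    hu.mono fun s hs => hL _ hs
  have ht := eq_of_eventuallyEq_nhdsGT (by fun_prop) (by fun_prop) heq
  exact ⟨L, hLM, hasDerivWithinAt_Ioi_iff_Ici.1
    (hline.hasDerivWithinAt.congr_of_eventuallyEq heq ht)⟩

theorem LinOnCellsWithBound.abs_sub_le (hf : LinOnCellsWithBound M f) (hc : Continuous f)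
    (x y : ι → ℝ) : |f y - f x| ≤ M * ‖y - x‖ := by
  choose L hLM hL using hf.exists_hasDerivWithinAt_Ici hc x (y - x)
  have := norm_image_sub_le_of_norm_deriv_right_le_segment
    (f := fun s => f (x + s • (y - x))) (a := 0) (b := 1) (by fun_prop) (fun s _ => hL s)
    (fun s _ => (L s).le_of_opNorm_le (hLM s) _) 1 (by simp)
  simpa using this

theorem apply_eq_of_forall_le_imp_le (hc : Continuous f) {L : (ι → ℝ) →L[ℝ] ℝ} {c : ℝ}
    {z : ι → ℝ} (hL : ∀ y, (∀ i j, y i ≤ y j ↔ z i ≤ z j) → f y = L y + c) {x : ι → ℝ}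
    (hx : ∀ i j, z i ≤ z j → x i ≤ x j) : f x = L x + c := by
  have hcell : ∀ᶠ s in 𝓝[>] (0 : ℝ), f (x + s • (z - x)) = L (x + s • (z - x)) + c := by
    filter_upwards [Ioo_mem_nhdsGT one_pos] with s ⟨hs₀, hs₁⟩
    refine hL _ fun i j => ?_
    simp only [Pi.add_apply, Pi.smul_apply, Pi.sub_apply, smul_eq_mul]
    constructor
    · intro h
      by_contra h'
      have := hx j i (not_le.1 h').le
      nlinarith
    · intro h
      have := hx i j h
      nlinarith
  simpa using eq_of_eventuallyEq_nhdsGT (by fun_prop) (by fun_prop) hcell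

theorem exists_majorant_monotone_along (z x : ι → ℝ) :
    ∃ p : ι → ℝ, (∀ i j, z i ≤ z j → p i ≤ p j) ∧
      ∀ i, x i ≤ p i ∧ ∃ j, z j ≤ z i ∧ p i = x j := by
  have hne : ∀ i, (univ.filter fun j => z j ≤ z i).Nonempty := fun i => ⟨i, by simp⟩
  refine ⟨fun i => (univ.filter fun j => z j ≤ z i).sup' (hne i) x, fun i j hij => ?_,
    fun i => ⟨le_sup' x (by simp), ?_⟩⟩
  · exact sup'_le _ _ fun k hk => le_sup' x (by simp_all [le_trans _ hij])
  · obtain ⟨j, hj, hpj⟩ := exists_mem_eq_sup' (hne i) x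
    exact ⟨j, by simpa using hj, hpj⟩

end Cells

section Spread

variable {ι : Type*} [Fintype ι] [LinearOrder ι]

def spread (x : ι → ℝ) : ℝ :=
  ∑ p ∈ univ.filter (fun p : ι × ι => p.1 < p.2), |x p.1 - x p.2|

noncomputable def signedSpread (z : ι → ℝ) : (ι → ℝ) →ₗ[ℝ] ℝ :=
  ∑ p ∈ univ.filter (fun p : ι × ι => p.1 < p.2),
    (SignType.sign (z p.1 - z p.2) : ℝ) • (LinearMap.proj (R := ℝ) (φ := fun _ : ι => ℝ) p.1 - LinearMap.proj p.2)

theorem signedSpread_apply (z x : ι → ℝ) :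
    signedSpread z x = ∑ p ∈ univ.filter (fun p : ι × ι => p.1 < p.2),
      (SignType.sign (z p.1 - z p.2) : ℝ) * (x p.1 - x p.2) := by
  simp [signedSpread]

theorem signedSpread_self (z : ι → ℝ) : signedSpread z z = spread z := by
  simp [signedSpread_apply, spread]

theorem spread_sub_signedSpread_eq (z x : ι → ℝ) :
    spread x - signedSpread z x = ∑ p ∈ univ.filter (fun p : ι × ι => p.1 < p.2),
      (|x p.1 - x p.2| - SignType.sign (z p.1 - z p.2) * (x p.1 - x p.2)) := by
  rw [spread, signedSpread_apply, ← sum_sub_distrib]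

theorem signedSpread_le_spread (z x : ι → ℝ) : signedSpread z x ≤ spread x := by
  rw [← sub_nonneg, spread_sub_signedSpread_eq]
  exact sum_nonneg fun p _ => abs_sub_sign_mul_nonneg _ _

theorem sub_le_spread_sub_signedSpread {z : ι → ℝ} (x : ι → ℝ) {i j : ι} (h : z j ≤ z i) :
    x j - x i ≤ spread x - signedSpread z x := by
  let g : ι → ι → ℝ := fun i j => |x i - x j| - SignType.sign (z i - z j) * (x i - x j)
  have hg_symm : g j i = g i j := by
    simp only [g]
    rw [← neg_sub (z i), ← neg_sub (x i), Left.sign_neg, abs_neg]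
    push_cast
    ring
  have hg_le : ∀ i j, i < j → g i j ≤ spread x - signedSpread z x := fun i j hij => by
    rw [spread_sub_signedSpread_eq]
    exact single_le_sum (f := fun p : ι × ι => g p.1 p.2) (fun p _ => abs_sub_sign_mul_nonneg _ _)
      (mem_filter.2 ⟨mem_univ (i, j), hij⟩)
  have hji : x j - x i ≤ g i j := by
    rcases h.lt_or_eq with h | h
    · simp only [g, sign_pos (sub_pos.2 h), SignType.coe_one, one_mul]
      linarith [abs_nonneg (x i - x j)]
    · simp only [g, h, sub_self, sign_zero, SignType.coe_zero, zero_mul, sub_zero]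
      linarith [neg_le_abs (x i - x j)]
  rcases lt_trichotomy i j with hij | rfl | hij
  · exact hji.trans (hg_le i j hij)
  · simpa using signedSpread_le_spread z x
  · exact hji.trans (hg_symm ▸ hg_le j i hij)

variable {M : ℝ} {f : (ι → ℝ) → ℝ}

theorem LinOnCellsWithBound.exists_sub_le_spread_sub_signedSpread
    (hf : LinOnCellsWithBound M f) (hc : Continuous f) (z : ι → ℝ) :
    ∃ (L : (ι → ℝ) →L[ℝ] ℝ) (c : ℝ), f z = L z + c ∧
      ∀ x, L x + c - f x ≤ 2 * M * (spread x - signedSpread z x) := by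
  obtain ⟨L, c, hLM, hL⟩ := hf z
  refine ⟨L, c, hL z fun _ _ => Iff.rfl, fun x => ?_⟩
  obtain ⟨p, hp_mono, hp⟩ := exists_majorant_monotone_along z x
  have hfp : f p = L p + c := apply_eq_of_forall_le_imp_le hc hL hp_mono
  have hpx : ‖p - x‖ ≤ spread x - signedSpread z x := by
    refine (pi_norm_le_iff_of_nonneg (sub_nonneg.2 (signedSpread_le_spread z x))).2 fun i => ?_
    obtain ⟨hxp, j, hzj, hpj⟩ := hp i
    rw [Pi.sub_apply, Real.norm_eq_abs, abs_of_nonneg (sub_nonneg.2 hxp), hpj]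
    exact sub_le_spread_sub_signedSpread x hzj
  calc L x + c - f x = L (x - p) + (f p - f x) := by rw [map_sub, hfp]; ring
    _ ≤ M * ‖x - p‖ + M * ‖p - x‖ := by
        gcongr
        · exact (le_abs_self _).trans (L.le_of_opNorm_le hLM _)
        · exact (le_abs_self _).trans (hf.abs_sub_le hc x p)
    _ ≤ 2 * M * (spread x - signedSpread z x) := by
        rw [norm_sub_rev x p]
        nlinarith [hf.nonneg]

theorem LinOnCellsWithBound.convexOn_mul_spread_add (hf : LinOnCellsWithBound M f)
    (hc : Continuous f) {C : ℝ} (hC : 2 * M ≤ C) :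
    ConvexOn ℝ univ fun x => C * spread x + f x := by
  refine convexOn_univ_of_forall_exists_linear_add_const_le fun z => ?_
  obtain ⟨L, c, hz, hle⟩ := hf.exists_sub_le_spread_sub_signedSpread hc z
  refine ⟨C • signedSpread z + L, c, ?_, fun x => ?_⟩
  · simp [signedSpread_self, hz, add_assoc]
  · have hgap := mul_le_mul_of_nonneg_right hC (sub_nonneg.2 (signedSpread_le_spread z x))
    simp only [LinearMap.add_apply, LinearMap.smul_apply, smul_eq_mul,
      ContinuousLinearMap.coe_coe]
    linarith [hle x]

end Spread

theorem stmt_15_general (N : ℕ) (f : (Fin N → ℝ) → ℝ)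
    (hfc : Continuous f) (hflin : LinOnCells f) :
    ∃ c : ℝ, 0 < c ∧ ConvexOn ℝ Set.univ (fun x : Fin N → ℝ =>
      c * (∑ p ∈ Finset.univ.filter (fun p : Fin N × Fin N => p.1 < p.2), |x p.1 - x p.2|)
        + f x) := by
  obtain ⟨M, hM⟩ := hflin.exists_linOnCellsWithBound
  exact ⟨2 * M + 1, by linarith [hM.nonneg], hM.convexOn_mul_spread_add hfc (by linarith)⟩

theorem stmt_15 (N : ℕ) (f : (Fin N → ℝ) → ℝ)
    (hfc : Continuous f) (hflin : LinOnCells f)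
    (hhom : ∀ (lam : ℝ) (x : Fin N → ℝ), 0 ≤ lam → f (fun i => lam * x i) = lam * f x)
    (hshift : ∀ (x : Fin N → ℝ) (h : ℝ), f (fun i => x i + h) = f x) :
    ∃ c : ℝ, 0 < c ∧ ConvexOn ℝ Set.univ (fun x : Fin N → ℝ =>
      c * (∑ p ∈ Finset.univ.filter (fun p : Fin N × Fin N => p.1 < p.2), |x p.1 - x p.2|)
        + f x) :=
  stmt_15_general N f hfc hflin
end
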